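/- Let s(x,θ) = ρ(x) + bⁱ(x)θᵢ + … + c·θ₁θ₂⋯θₙ be an element of A = R[x¹,…,xⁿ]⊗Λ(θ₁,…,θₙ) satisfying Δ₀ s = 0, where Δ₀ = Σᵢ∂²/∂xⁱ∂θᵢ. Then the top coefficient c (the coefficient of θ₁⋯θₙ) is annihilated by all ∂/∂xⁱ, i.e. c is a constant. -/

import Mathlib

/-! In the coefficient of `θ_{univ \ {i}}` in `Δ₀ s`, every term `∂²/∂xʲ∂θⱼ` with `j ≠ i` vanishes
because `θⱼ` already occurs in the monomial; what remains is `±∂c/∂xⁱ`, which must therefore be `0`. -/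

open scoped BigOperators

noncomputable section

namespace OddSymp

variable (R : Type*) [CommRing R] (n : ℕ)

/-- The superalgebra `A = R[x¹,…,xⁿ] ⊗ Λ(θ₁,…,θₙ)`, represented by its coefficient
functions: the value at a finset `S ⊆ {1,…,n}` is the coefficient (a polynomial in
the even variables `x`) of the monomial `θ_S` (product in increasing order). -/
abbrev SAlg := Finset (Fin n) → MvPolynomial (Fin n) R

variable {R n}

/-- Koszul sign arising when multiplying `θ_S · θ_T` (for disjoint `S`, `T`). -/
def eps (S T : Finset (Fin n)) : ℤ :=
  (-1 : ℤ) ^ ((S ×ˢ T).filter (fun p => p.2 < p.1)).card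

/-- The supercommutative product on `A`. -/
def mul (f g : SAlg R n) : SAlg R n := fun U =>
  ∑ S ∈ U.powerset, eps S (U \ S) • (f S * g (U \ S))

/-- The unit of `A`. -/
def one : SAlg R n := fun S => if S = ∅ then 1 else 0

/-- The odd generator `θ_i`. -/
def theta (i : Fin n) : SAlg R n := fun S => if S = {i} then 1 else 0

/-- The even partial derivative `∂/∂xⁱ`. -/
def pdx (i : Fin n) (f : SAlg R n) : SAlg R n := fun S => MvPolynomial.pderiv i (f S)

/-- The left odd partial derivative `∂/∂θᵢ`. -/
def pdθ (i : Fin n) (f : SAlg R n) : SAlg R n := fun T =>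
  if i ∈ T then 0
  else ((-1 : ℤ) ^ ((T.filter (fun j => j < i)).card)) • f (insert i T)

/-- The canonical Batalin–Vilkovisky operator `Δ₀ = Σᵢ ∂²/∂xⁱ∂θᵢ` in Darboux
coordinates. -/
def delta0 (f : SAlg R n) : SAlg R n := ∑ i : Fin n, pdx i (pdθ i f)

/-- The canonical odd Poisson (Buttin) bracket
`{f,g} = Σᵢ (∂f/∂xⁱ ∂g/∂θᵢ + (−1)^{p(f)} ∂f/∂θᵢ ∂g/∂xⁱ)`, where `p` is the parity
of (the homogeneous element) `f`, passed as the parameter `p`. -/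
def bracket (p : ℕ) (f g : SAlg R n) : SAlg R n :=
  ∑ i : Fin n,
    (mul (pdx i f) (pdθ i g) + ((-1 : ℤ) ^ p) • mul (pdθ i f) (pdx i g))

/-- `f` is ℤ/2-homogeneous of parity `p`. -/
def IsHomog (f : SAlg R n) (p : ℕ) : Prop := ∀ S, f S ≠ 0 → S.card % 2 = p % 2

/-- `f` is homogeneous of degree `d` in the odd variables `θ`. -/
def ThetaHomog (f : SAlg R n) (d : ℕ) : Prop := ∀ S, f S ≠ 0 → S.card = d

end OddSymp

end

namespace OddSymp

variable {R : Type*} [CommRing R] {n : ℕ}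

theorem pdθ_apply_of_mem {i : Fin n} {T : Finset (Fin n)} (hi : i ∈ T) (f : SAlg R n) :
    pdθ i f T = 0 :=
  if_pos hi

theorem pdθ_apply_of_notMem {i : Fin n} {T : Finset (Fin n)} (hi : i ∉ T) (f : SAlg R n) :
    pdθ i f T = ((-1 : ℤ) ^ ((T.filter (fun j => j < i)).card)) • f (insert i T) :=
  if_neg hi

theorem delta0_apply (f : SAlg R n) (T : Finset (Fin n)) :
    delta0 f T = ∑ j ∈ Tᶜ, MvPolynomial.pderiv j (pdθ j f T) := by
  simp only [delta0, Finset.sum_apply, pdx]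
  refine (Finset.sum_subset (Finset.subset_univ _) fun j _ hj => ?_).symm
  rw [pdθ_apply_of_mem (by simpa using hj), map_zero]

theorem delta0_apply_erase_univ (f : SAlg R n) (i : Fin n) :
    delta0 f (Finset.univ.erase i) =
      ((-1 : ℤ) ^ (((Finset.univ.erase i).filter (fun j => j < i)).card)) •
        MvPolynomial.pderiv i (f Finset.univ) := by
  have hcompl : (Finset.univ.erase i)ᶜ = {i} := by
    ext j
    simp
  rw [delta0_apply, hcompl, Finset.sum_singleton,
    pdθ_apply_of_notMem (Finset.notMem_erase i _), Finset.insert_erase (Finset.mem_univ i),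
    map_zsmul]

theorem neg_one_pow_zsmul_eq_zero_iff {M : Type*} [AddCommGroup M] (k : ℕ) (x : M) :
    (-1 : ℤ) ^ k • x = 0 ↔ x = 0 := by
  rcases neg_one_pow_eq_or ℤ k with hk | hk <;> simp [hk]

end OddSymp

open OddSymp in
/-- if `Δ₀ s = 0` then the top coefficient `c` of `s` (the coefficient
of `θ₁θ₂⋯θₙ`, i.e. the value of the coefficient function at `Finset.univ`) is a
constant: all its partial derivatives `∂c/∂xⁱ` vanish. -/
theorem stmt19 {R : Type*} [CommRing R] {n : ℕ} (s : SAlg R n)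
    (h : delta0 s = 0) :
    ∀ i : Fin n, MvPolynomial.pderiv i (s Finset.univ) = 0 := by
  intro i
  have hcoeff := congrFun h (Finset.univ.erase i)
  rwa [Pi.zero_apply, delta0_apply_erase_univ, neg_one_pow_zsmul_eq_zero_iff] at hcoeff
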